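/- Let G be a finite group such that G_i is H_1 and V_i = 1 (so G_i is central). Let a ∈ G_{i-1} \ V_{i-1} and K = C_G(a). Then G/K is isomorphic to G_i. -/

import Mathlib

open Subgroup
open scoped Pointwise

/-- The vanishing-off subgroup `V(G)`: generated by all `g` at which some
nonlinear irreducible character does not vanish. -/
def vanishingOff (G : Type) [Group G] : Subgroup G :=
  Subgroup.closure {g | ∃ V : FDRep ℂ G, CategoryTheory.Simple V ∧
    1 < Module.finrank ℂ V ∧ FDRep.character V g ≠ 0}

instance vanishingOff_normal (G : Type) [Group G] : (vanishingOff G).Normal := by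
  constructor
  intro n hn g
  have hset : ∀ x ∈ {g | ∃ V : FDRep ℂ G, CategoryTheory.Simple V ∧
      1 < Module.finrank ℂ V ∧ FDRep.character V g ≠ 0}, ∀ h : G,
      h * x * h⁻¹ ∈ vanishingOff G := by
    intro x hx h
    apply Subgroup.subset_closure
    obtain ⟨V, h1, h2, h3⟩ := hx
    exact ⟨V, h1, h2, by rwa [FDRep.char_conj]⟩
  induction hn using Subgroup.closure_induction with
  | mem x hx => exact hset x hx g
  | one => simpa using (vanishingOff G).one_mem
  | mul x y _ _ hx hy =>
      have : g * (x * y) * g⁻¹ = (g * x * g⁻¹) * (g * y * g⁻¹) := by group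
      rw [this]; exact mul_mem hx hy
  | inv x _ hx =>
      have : g * x⁻¹ * g⁻¹ = (g * x * g⁻¹)⁻¹ := by group
      rw [this]; exact inv_mem hx

/-- `paperV G i` is `V_i` : `V_1 = V(G)`, `V_i = [V_{i-1}, G]`. -/
def paperV (G : Type) [Group G] : ℕ → Subgroup G
  | 0 => ⊤
  | 1 => vanishingOff G
  | (n+2) => ⁅paperV G (n+1), (⊤ : Subgroup G)⁆

instance paperV_normal (G : Type) [Group G] (i : ℕ) : (paperV G i).Normal := by
  induction i with
  | zero => exact inferInstanceAs (⊤ : Subgroup G).Normal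
  | succ n ih =>
    match n, ih with
    | 0, _ => exact inferInstanceAs (vanishingOff G).Normal
    | (m+1), ih => exact Subgroup.commutator_normal _ _

/-- `paperLCS G i` is `G_i`, the `i`-th term of the lower central series with
the paper's indexing: `G_1 = G`, `G_{i+1} = [G_i, G]`. -/
def paperLCS (G : Type) [Group G] (i : ℕ) : Subgroup G := (⊤ : Subgroup G).lowerCentralSeries (i - 1)

instance paperLCS_normal (G : Type) [Group G] (i : ℕ) : (paperLCS G i).Normal :=
  Subgroup.lowerCentralSeries_normal _ _

/-- `Y_i`, defined by `Y_i/V_i = Z(G/V_i)`. -/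
def paperY (G : Type) [Group G] (i : ℕ) : Subgroup G :=
  (Subgroup.center (G ⧸ paperV G i)).comap (QuotientGroup.mk' (paperV G i))

instance paperY_normal (G : Type) [Group G] (i : ℕ) : (paperY G i).Normal :=
  Subgroup.Normal.comap inferInstance _

/-- `D_i`, defined by `D_i/V_i = C_{G/V_i}(G_{i-1}/V_i)`. -/
def paperD (G : Type) [Group G] (i : ℕ) : Subgroup G :=
  (Subgroup.centralizer (((paperLCS G (i-1)).map (QuotientGroup.mk' (paperV G i))) :
      Set (G ⧸ paperV G i))).comap (QuotientGroup.mk' (paperV G i))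

instance paperLCSinfY_normal (G : Type) [Group G] (i j : ℕ) :
    (paperLCS G i ⊓ paperY G j).Normal := Subgroup.normal_inf_normal _ _

/-- `E_i`, defined by `E_i/(G_{i-1} ∩ Y_i) = C_{G/(G_{i-1} ∩ Y_i)}(G_{i-2}/(G_{i-1} ∩ Y_i))`. -/
def paperE (G : Type) [Group G] (i : ℕ) : Subgroup G :=
  (Subgroup.centralizer (((paperLCS G (i-2)).map
      (QuotientGroup.mk' (paperLCS G (i-1) ⊓ paperY G i))) :
      Set (G ⧸ (paperLCS G (i-1) ⊓ paperY G i)))).comap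
    (QuotientGroup.mk' (paperLCS G (i-1) ⊓ paperY G i))

/-- `G_i` is `H_1`: for every normal `N` with `V_i ≤ N < G_i`,
`V_{i-1}/N = (G_{i-1}/N) ∩ Z(G/N)`. -/
def IsH1 (G : Type) [Group G] (i : ℕ) : Prop :=
  ∀ (N : Subgroup G) (hN : N.Normal), paperV G i ≤ N → N < paperLCS G i →
    letI := hN
    (paperV G (i-1)).map (QuotientGroup.mk' N) =
      (paperLCS G (i-1)).map (QuotientGroup.mk' N) ⊓ Subgroup.center (G ⧸ N)

section AuxiliaryForStmt7

open Module LinearMap CategoryTheory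


noncomputable section AuxRep
variable {k : Type*} [Field k] {V : Type*} [AddCommGroup V] [Module k V]
  [FiniteDimensional k V]

theorem trace_add_of_invariant (f : V →ₗ[k] V) (p : Submodule k V)
    (hp : ∀ x ∈ p, f x ∈ p) :
    trace k V f = trace k p (f.restrict hp) +
      trace k (V ⧸ p) (Submodule.mapQ p p f hp) := by
  obtain ⟨q, hq⟩ := p.exists_isCompl
  set πp : V →ₗ[k] p := p.projectionOnto q hq with hπp
  set πq : V →ₗ[k] q := q.projectionOnto p hq.symm with hπq
  have hdecomp : ∀ x : V, (πp x : V) + (πq x : V) = x := by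
    intro x
    obtain ⟨u, hu, v, hv, rfl⟩ :=
      Submodule.mem_sup.mp (by rw [hq.sup_eq_top]; trivial : x ∈ p ⊔ q)
    rw [map_add, map_add, hπp, hπq, Submodule.projectionOnto_apply_of_mem_left hq hu,
      Submodule.projectionOnto_apply_of_mem_right hq hv,
      Submodule.projectionOnto_apply_of_mem_left hq.symm hv,
      Submodule.projectionOnto_apply_of_mem_right hq.symm hu]
    simp [add_comm]
  have hid : (LinearMap.id : V →ₗ[k] V)
      = p.subtype.comp πp + q.subtype.comp πq := by
    ext x
    simpa using (hdecomp x).symm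
  have hsplit : f = f.comp (p.subtype.comp πp) + f.comp (q.subtype.comp πq) := by
    rw [← LinearMap.comp_add, ← hid, LinearMap.comp_id]
  conv_lhs => rw [hsplit]
  rw [map_add]
  congr 1
  · rw [show f.comp (p.subtype.comp πp) = (f.comp p.subtype).comp πp by
      rw [LinearMap.comp_assoc]]
    rw [LinearMap.trace_comp_comm']
    congr 1
    ext x
    simp [LinearMap.restrict_apply, hπp,
      Submodule.projectionOnto_apply_of_mem_left hq (hp x x.2)]
  · rw [show f.comp (q.subtype.comp πq) = (f.comp q.subtype).comp πq by
      rw [LinearMap.comp_assoc]]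
    rw [LinearMap.trace_comp_comm']
    set e : (V ⧸ p) ≃ₗ[k] q := p.quotientEquivOfIsCompl q hq
    have he : ∀ v : V, e (Submodule.Quotient.mk v) = πq v := by
      intro v
      have hv : Submodule.Quotient.mk (p := p) v
          = Submodule.Quotient.mk ((πq v : V)) := by
        rw [Submodule.Quotient.eq]
        have h2 : v - (πq v : V) = (πp v : V) := by
          rw [sub_eq_iff_eq_add]; exact (hdecomp v).symm
        rw [h2]; exact (πp v).2
      rw [hv]
      exact Submodule.quotientEquivOfIsCompl_apply_mk_right hq (πq v)
    have : πq.comp (f.comp q.subtype) = e.conj (Submodule.mapQ p p f hp) := by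
      ext x
      have : (Submodule.mapQ p p f hp) (e.symm x) = Submodule.Quotient.mk (f x) := by
        rw [Submodule.quotientEquivOfIsCompl_symm_apply, Submodule.mapQ_apply]
      simp [LinearEquiv.conj_apply, this, he]
    rw [this, LinearMap.trace_conj']


variable {G : Type} [Group G]
variable {V : Type} [AddCommGroup V] [Module ℂ V]

/-- Restriction of a representation to an invariant submodule. -/
def subRep (ρ : Representation ℂ G V) (p : Submodule ℂ V)
    (hp : ∀ g : G, ∀ x ∈ p, ρ g x ∈ p) : Representation ℂ G p where
  toFun g := (ρ g).restrict (hp g)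
  map_one' := by ext x; simp [LinearMap.restrict_apply]
  map_mul' g h := by ext x; simp [LinearMap.restrict_apply]

lemma subRep_apply (ρ : Representation ℂ G V) (p : Submodule ℂ V)
    (hp : ∀ g : G, ∀ x ∈ p, ρ g x ∈ p) (g : G) (x : p) :
    (subRep ρ p hp g x : V) = ρ g x := rfl

/-- The quotient representation. -/
def quotRep (ρ : Representation ℂ G V) (p : Submodule ℂ V)
    (hp : ∀ g : G, ∀ x ∈ p, ρ g x ∈ p) : Representation ℂ G (V ⧸ p) where
  toFun g := Submodule.mapQ p p (ρ g) (fun x hx => hp g x hx)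
  map_one' := by
    apply Submodule.linearMap_qext
    ext x
    simp
  map_mul' g h := by
    apply Submodule.linearMap_qext
    ext x
    simp [Submodule.mapQ_apply]

theorem trace_onedim (ρ : Representation ℂ G V) [FiniteDimensional ℂ V]
    (h1 : finrank ℂ V = 1) {g : G} (hg : g ∈ commutator G) :
    trace ℂ V (ρ g) = 1 := by
  obtain ⟨v, hv, hspan⟩ := finrank_eq_one_iff'.mp h1
  have hex : ∀ x : V, ∃ r : ℂ, x = r • v := fun x => by
    obtain ⟨r, hr⟩ := hspan x; exact ⟨r, hr.symm⟩
  set c : G → ℂ := fun g => Classical.choose (hex (ρ g v)) with hcdef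
  have hc : ∀ g : G, ρ g v = c g • v := fun g => Classical.choose_spec (hex (ρ g v))
  have hscal : ∀ (g : G) (x : V), ρ g x = c g • x := by
    intro g x
    obtain ⟨r, rfl⟩ := hex x
    rw [map_smul, hc, smul_comm]
  have hinj := smul_left_injective ℂ hv
  have hone : c 1 = 1 := by
    have : (1 : ℂ) • v = c 1 • v := by rw [one_smul, ← hc, map_one]; rfl
    exact (hinj this).symm
  have hmul : ∀ g h : G, c (g * h) = c g * c h := by
    intro g h
    apply hinj
    show c (g * h) • v = (c g * c h) • v
    rw [← hc, map_mul]
    show ρ g (ρ h v) = (c g * c h) • v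
    rw [hc h, map_smul, hc g, mul_smul]
    exact smul_comm _ _ _
  let cm : G →* ℂ := { toFun := c, map_one' := hone, map_mul' := hmul }
  have hker : cm.toHomUnits g = 1 :=
    Abelianization.commutator_subset_ker cm.toHomUnits hg
  have hcg : c g = 1 := by
    have := congrArg (Units.val) hker
    rwa [MonoidHom.coe_toHomUnits] at this
  have hρ : ρ g = c g • LinearMap.id := by
    ext x; simp [hscal]
  rw [hρ, map_smul, trace_id, h1, hcg]
  simp


theorem simple_of_minimal (ρ : Representation ℂ G V) [FiniteDimensional ℂ V]
    (hnz : 0 < finrank ℂ V)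
    (hmin : ∀ p : Submodule ℂ V, (∀ g : G, ∀ x ∈ p, ρ g x ∈ p) → p ≠ ⊥ → p = ⊤) :
    Simple (FDRep.of ρ) := by
  constructor
  intro Y f hmono
  constructor
  · intro hiso h0
    have h1 : 𝟙 (FDRep.of ρ) = (0 : FDRep.of ρ ⟶ FDRep.of ρ) := by
      have hepi : Epi f := inferInstance
      apply (cancel_epi f).mp
      rw [h0]
      simp
    obtain ⟨v, hv⟩ : ∃ v : V, v ≠ 0 := by
      have : Nontrivial V := finrank_pos_iff.mp hnz
      exact exists_ne 0
    apply hv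
    have h2 := congrArg (fun φ => φ.hom.hom.hom) h1
    have h3 := LinearMap.congr_fun h2 v
    simpa using h3
  · intro hf0
    have hcommYX : ∀ (g : G) (y : Y.V), f.hom.hom.hom (Y.ρ g y) = ρ g (f.hom.hom.hom y) := by
      intro g y
      exact LinearMap.congr_fun (congrArg (fun φ => φ.hom.hom) (f.comm g)) y
    have hKinv : ∀ g : G, ∀ x ∈ LinearMap.ker f.hom.hom.hom, Y.ρ g x ∈ LinearMap.ker f.hom.hom.hom := by
      intro g x hx
      simp only [LinearMap.mem_ker] at hx ⊢
      exact (hcommYX g x).trans (by rw [hx, map_zero])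
    have hinj : Function.Injective f.hom.hom.hom := by
      rw [← LinearMap.ker_eq_bot]
      by_contra hk
      let ι : FDRep.of (subRep Y.ρ (LinearMap.ker f.hom.hom.hom) hKinv) ⟶ Y :=
        ⟨FGModuleCat.ofHom (LinearMap.ker f.hom.hom.hom).subtype, fun g => rfl⟩
      have hcomp : ι ≫ f = 0 ≫ f := by
        apply Action.hom_ext
        ext ⟨x, hx⟩
        simp [ι]
        exact hx
      have hι : ι = 0 := (cancel_mono f).mp hcomp
      apply hk
      rw [Submodule.eq_bot_iff]
      intro x hx
      have h2 := congrArg (fun φ => φ.hom.hom.hom) hι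
      have h3 := LinearMap.congr_fun h2 ⟨x, hx⟩
      simp [ι] at h3
      exact h3
    have hrinv : ∀ g : G, ∀ x ∈ LinearMap.range f.hom.hom.hom, ρ g x ∈ LinearMap.range f.hom.hom.hom := by
      rintro g x ⟨y, rfl⟩
      exact ⟨Y.ρ g y, hcommYX g y⟩
    have hrne : LinearMap.range f.hom.hom.hom ≠ ⊥ := by
      intro hr
      apply hf0
      apply Action.hom_ext
      apply FGModuleCat.hom_ext
      exact LinearMap.range_eq_bot.mp hr
    have hsurj : Function.Surjective f.hom.hom.hom := by
      rw [← LinearMap.range_eq_top]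
      exact hmin _ hrinv hrne
    let e := LinearEquiv.ofBijective (f.hom.hom.hom : Y.V →ₗ[ℂ] V) ⟨hinj, hsurj⟩
    have : IsIso f.hom := by
      refine ⟨FGModuleCat.ofHom e.symm.toLinearMap, ?_, ?_⟩
      · ext x
        exact e.symm_apply_apply x
      · ext x
        exact e.apply_symm_apply x
    exact Action.isIso_of_hom_isIso f
theorem char_of_eq {V : Type} [AddCommGroup V] [Module ℂ V] [FiniteDimensional ℂ V]
    (ρ : Representation ℂ G V) (g : G) :
    FDRep.character (FDRep.of ρ) g = trace ℂ V (ρ g) := rfl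

theorem char_nat (g : G) (Hg1 : g ∈ commutator G)
    (Hg : ∀ W : FDRep ℂ G, Simple W → 1 < finrank ℂ W → FDRep.character W g = 0) :
    ∀ (n : ℕ) (V : Type) (_ : AddCommGroup V) (_ : Module ℂ V)
      (_ : FiniteDimensional ℂ V) (ρ : Representation ℂ G V),
      finrank ℂ V = n → ∃ m : ℕ, trace ℂ V (ρ g) = m := by
  intro n
  induction n using Nat.strong_induction_on with
  | _ n IH =>
    intro V _ _ _ ρ hn
    by_cases h0 : finrank ℂ V = 0
    · have : Subsingleton V := finrank_zero_iff.mp h0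
      refine ⟨0, ?_⟩
      have : ρ g = 0 := Subsingleton.elim _ _
      rw [this, map_zero, Nat.cast_zero]
    · by_cases hmin : ∀ p : Submodule ℂ V, (∀ g : G, ∀ x ∈ p, ρ g x ∈ p) → p ≠ ⊥ → p = ⊤
      · by_cases hr1 : finrank ℂ V = 1
        · exact ⟨1, by rw [trace_onedim ρ hr1 Hg1, Nat.cast_one]⟩
        · have hs : Simple (FDRep.of ρ) :=
            simple_of_minimal ρ (by omega) hmin
          refine ⟨0, ?_⟩
          rw [Nat.cast_zero, ← char_of_eq]
          exact Hg (FDRep.of ρ) hs (by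
            show 1 < finrank ℂ (FDRep.of ρ)
            have : finrank ℂ (FDRep.of ρ) = finrank ℂ V := rfl
            omega)
      · push_neg at hmin
        obtain ⟨p, hpinv, hpbot, hptop⟩ := hmin
        have h1 : finrank ℂ p < n := by
          have := Submodule.finrank_lt (K := ℂ) (V := V) hptop
          omega
        have h2 : finrank ℂ (V ⧸ p) < n := by
          have hq := Submodule.finrank_quotient_add_finrank p
          have hppos : 0 < finrank ℂ p := by
            by_contra h
            exact hpbot ((Submodule.finrank_eq_zero (R := ℂ)).mp (by omega))
          omega
        obtain ⟨m1, hm1⟩ := IH _ h1 p inferInstance inferInstance inferInstance (subRep ρ p hpinv) rfl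
        obtain ⟨m2, hm2⟩ := IH _ h2 (V ⧸ p) inferInstance inferInstance inferInstance (quotRep ρ p hpinv) rfl
        refine ⟨m1 + m2, ?_⟩
        rw [trace_add_of_invariant (ρ g) p (hpinv g)]
        have e1 : trace ℂ p ((ρ g).restrict (hpinv g)) = m1 := hm1
        have e2 : trace ℂ (V ⧸ p) (Submodule.mapQ p p (ρ g) (hpinv g)) = m2 := hm2
        rw [e1, e2, Nat.cast_add]


end AuxRep

noncomputable section MoreAux
variable {G : Type} [Group G]

/-- The permutation representation on `X →₀ ℂ`. -/
def finRep (X : Type) [MulAction G X] : Representation ℂ G (X →₀ ℂ) where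
  toFun g := Finsupp.lmapDomain ℂ ℂ (g • ·)
  map_one' := by ext; simp
  map_mul' x y := by ext; simp [mul_smul, Finsupp.mapDomain_comp]

lemma finRep_single {X : Type} [MulAction G X] (g : G) (x : X) (r : ℂ) :
    finRep X g (Finsupp.single x r) = Finsupp.single (g • x) r := by
  simp [finRep]

theorem reg_trace_eq_zero [Fintype G] {g : G} (hg : g ≠ 1) :
    trace ℂ (G →₀ ℂ) (finRep (G := G) G g) = 0 := by
  classical
  rw [trace_eq_matrix_trace ℂ (Finsupp.basisSingleOne (R := ℂ) (ι := G))]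
  rw [Matrix.trace]
  apply Finset.sum_eq_zero
  intro x _
  rw [Matrix.diag_apply, LinearMap.toMatrix_apply]
  have h1 : (Finsupp.basisSingleOne (R := ℂ) (ι := G)) x = Finsupp.single x 1 := rfl
  rw [h1, finRep_single]
  have h2 : ∀ y : (G →₀ ℂ), (Finsupp.basisSingleOne (R := ℂ) (ι := G)).repr y = y :=
    fun y => rfl
  rw [h2, Finsupp.single_apply, if_neg]
  intro h
  apply hg
  have : g • x = x := h
  rw [smul_eq_mul] at this
  calc g = g * x * x⁻¹ := by group
  _ = x * x⁻¹ := by rw [this]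
  _ = 1 := by group

theorem triv_trace_eq_card (Q : Type) [Group Q] [Fintype Q] [MulAction G Q] {g : G}
    (hg : ∀ q : Q, g • q = q) :
    trace ℂ (Q →₀ ℂ) (finRep (G := G) Q g) = Fintype.card Q := by
  classical
  have h1 : finRep (G := G) Q g = LinearMap.id := by
    apply Finsupp.lhom_ext
    intro q c
    rw [finRep_single, hg]
    rfl
  rw [h1, ← Module.End.one_eq_id, trace_one, finrank_finsupp_self]

theorem commutator_le_vanishingOff (G : Type) [Group G] [Finite G] :
    commutator G ≤ vanishingOff G := by
  intro g hg
  by_contra hv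
  have hone : g ≠ 1 := by rintro rfl; exact hv (one_mem _)
  have Hg : ∀ W : FDRep ℂ G, Simple W → 1 < finrank ℂ W → FDRep.character W g = 0 := by
    intro W hs hd
    by_contra hc
    exact hv (Subgroup.subset_closure ⟨W, hs, hd, hc⟩)
  letI : Fintype G := Fintype.ofFinite G
  classical
  set Q := G ⧸ commutator G with hQ
  letI : Fintype Q := Fintype.ofFinite Q
  set φ : (G →₀ ℂ) →ₗ[ℂ] (Q →₀ ℂ) := Finsupp.lmapDomain ℂ ℂ (QuotientGroup.mk : G → Q) with hφ
  set ρ : Representation ℂ G (G →₀ ℂ) := finRep (G := G) G with hρ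
  set σ : Representation ℂ G (Q →₀ ℂ) := finRep (G := G) Q with hσ
  have hequiv : ∀ h : G, φ.comp (ρ h) = (σ h).comp φ := by
    intro h
    apply Finsupp.lhom_ext
    intro x c
    show φ (ρ h (Finsupp.single x c)) = σ h (φ (Finsupp.single x c))
    rw [hρ, hσ, hφ]
    simp only [finRep_single, Finsupp.lmapDomain_apply,
      Finsupp.mapDomain_single]
    rfl
  have hpinv : ∀ h : G, ∀ x ∈ LinearMap.ker φ, ρ h x ∈ LinearMap.ker φ := by
    intro h x hx
    simp only [LinearMap.mem_ker] at hx ⊢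
    have := LinearMap.congr_fun (hequiv h) x
    simp only [LinearMap.comp_apply] at this
    rw [this, hx, map_zero]
  have hsurj : Function.Surjective φ := by
    intro y
    induction y using Finsupp.induction_linear with
    | zero => exact ⟨0, map_zero φ⟩
    | add f g hf hg =>
      obtain ⟨a, ha⟩ := hf; obtain ⟨b, hb⟩ := hg
      exact ⟨a + b, by rw [map_add, ha, hb]⟩
    | single q c =>
      obtain ⟨x, rfl⟩ := QuotientGroup.mk_surjective q
      exact ⟨Finsupp.single x c, by rw [hφ]; simp [Finsupp.lmapDomain_apply]⟩
  have hgtriv : ∀ q : Q, g • q = q := by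
    intro q
    obtain ⟨x, rfl⟩ := QuotientGroup.mk_surjective q
    show QuotientGroup.mk (g * x) = QuotientGroup.mk x
    rw [QuotientGroup.eq]
    have h1 : g⁻¹ ∈ commutator G := inv_mem hg
    have := (inferInstance : (commutator G).Normal).conj_mem g⁻¹ h1 x⁻¹
    simpa [mul_assoc] using this
  -- the quotient of the regular rep by ker φ has trace card Q at g
  set p : Submodule ℂ (G →₀ ℂ) := LinearMap.ker φ with hp
  have hsplit := trace_add_of_invariant (ρ g) p (hpinv g)
  obtain ⟨m, hm⟩ := char_nat g hg Hg (finrank ℂ p) p inferInstance inferInstance inferInstance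
    (⟨⟨fun h => (ρ h).restrict (hpinv h), by ext x; simp [LinearMap.restrict_apply]⟩,
      fun a b => by ext x; simp [LinearMap.restrict_apply]⟩) rfl
  have e1 : trace ℂ p ((ρ g).restrict (hpinv g)) = m := hm
  set eLM : ((G →₀ ℂ) ⧸ p) →ₗ[ℂ] (Q →₀ ℂ) := p.liftQ φ le_rfl with heLM
  have hbij : Function.Bijective eLM := by
    constructor
    · rw [← LinearMap.ker_eq_bot]
      exact Submodule.ker_liftQ_eq_bot p φ le_rfl le_rfl
    · rw [← LinearMap.range_eq_top]
      rw [heLM, Submodule.range_liftQ]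
      exact LinearMap.range_eq_top.mpr hsurj
  set e := LinearEquiv.ofBijective eLM hbij with he
  have hcomm : e.toLinearMap.comp (Submodule.mapQ p p (ρ g) (hpinv g))
      = (σ g).comp e.toLinearMap := by
    apply Submodule.linearMap_qext
    refine LinearMap.ext fun x => ?_
    simp only [LinearMap.comp_apply, Submodule.mkQ_apply, Submodule.mapQ_apply,
      LinearEquiv.coe_coe, he, LinearEquiv.ofBijective_apply, heLM, Submodule.liftQ_apply]
    have h2 := LinearMap.congr_fun (hequiv g) x
    simpa using h2
  have e2 : trace ℂ ((G →₀ ℂ) ⧸ p) (Submodule.mapQ p p (ρ g) (hpinv g))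
      = Fintype.card Q := by
    have hconj : e.conj (Submodule.mapQ p p (ρ g) (hpinv g)) = σ g := by
      refine LinearMap.ext fun y => ?_
      have h2 := LinearMap.congr_fun hcomm (e.symm y)
      simp only [LinearMap.comp_apply, LinearEquiv.coe_coe] at h2 ⊢
      rw [LinearEquiv.conj_apply, LinearMap.comp_apply, LinearMap.comp_apply]
      simp only [LinearEquiv.coe_coe]
      rw [h2, e.apply_symm_apply]
    rw [← trace_conj' (Submodule.mapQ p p (ρ g) (hpinv g)) e, hconj]
    exact triv_trace_eq_card Q hgtriv
  have h0 := reg_trace_eq_zero hone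
  have hz : (m : ℂ) + (Fintype.card Q : ℂ) = 0 := by
    rw [← e1, ← e2, ← hsplit]
    exact h0
  have hz2 : ((m + Fintype.card Q : ℕ) : ℂ) = 0 := by push_cast; exact hz
  have hz3 : m + Fintype.card Q = 0 := by exact_mod_cast hz2
  have : Fintype.card Q ≠ 0 := Fintype.card_ne_zero
  omega

end MoreAux

end AuxiliaryForStmt7

theorem lcs_le_paperV (G : Type) [Group G] [Finite G] (j : ℕ) :
    (⊤ : Subgroup G).lowerCentralSeries (j+1) ≤ paperV G (j+1) := by
  induction j with
  | zero =>
    have : (⊤ : Subgroup G).lowerCentralSeries 1 = commutator G := top_lowerCentralSeries_one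
    rw [this]
    exact commutator_le_vanishingOff G
  | succ n ih =>
    show ⁅(⊤ : Subgroup G).lowerCentralSeries (n+1), ⊤⁆ ≤ ⁅paperV G (n+1), ⊤⁆
    exact Subgroup.commutator_mono ih le_rfl

open scoped commutatorElement in
theorem stmt7 (G : Type) [Group G] [Finite G] (i : ℕ) (hi : 2 ≤ i)
    (hH1 : IsH1 G i) (hV : paperV G i = ⊥)
    (a : G) (ha : a ∈ paperLCS G (i-1)) (ha' : a ∉ paperV G (i-1)) :
    ∃ hK : (Subgroup.centralizer ({a} : Set G)).Normal,
      letI := hK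
      Nonempty ((G ⧸ Subgroup.centralizer ({a} : Set G)) ≃* paperLCS G i) := by
  obtain ⟨j, rfl⟩ : ∃ j, i = j + 2 := ⟨i - 2, by omega⟩
  -- basic facts
  have hlcs : paperLCS G (j+2) = (⊤ : Subgroup G).lowerCentralSeries (j+1) := rfl
  have hlcs' : paperLCS G (j+2-1) = (⊤ : Subgroup G).lowerCentralSeries j := rfl
  have hVi : paperV G (j+2) = ⁅paperV G (j+1), (⊤ : Subgroup G)⁆ := rfl
  have hVcent : paperV G (j+1) ≤ Subgroup.center G := by
    have h1 : ⁅paperV G (j+1), (⊤ : Subgroup G)⁆ = ⊥ := by rw [← hVi, hV]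
    have h2 := Subgroup.commutator_eq_bot_iff_le_centralizer.mp h1
    rwa [Subgroup.coe_top, Subgroup.centralizer_univ] at h2
  have hGi_le_V : paperLCS G (j+2) ≤ paperV G (j+1) := lcs_le_paperV G j
  have hGi_cent : paperLCS G (j+2) ≤ Subgroup.center G := hGi_le_V.trans hVcent
  -- a is in lcs j
  have ha2 : a ∈ (⊤ : Subgroup G).lowerCentralSeries j := ha
  -- the homomorphism
  have hcommGi : ∀ g : G, ⁅a, g⁆ ∈ paperLCS G (j+2) := by
    intro g
    show ⁅a, g⁆ ∈ ⁅(⊤ : Subgroup G).lowerCentralSeries j, ⊤⁆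
    exact Subgroup.commutator_mem_commutator ha2 (Subgroup.mem_top g)
  have hcent : ∀ g : G, ⁅a, g⁆ ∈ Subgroup.center G := fun g => hGi_cent (hcommGi g)
  have hcent' : ∀ g x : G, x * ⁅a, g⁆ = ⁅a, g⁆ * x := by
    intro g x
    exact (Subgroup.mem_center_iff.mp (hcent g)) x
  let φ : G →* G := {
    toFun := fun g => ⁅a, g⁆
    map_one' := by group
    map_mul' := by
      intro x y
      show ⁅a, x * y⁆ = ⁅a, x⁆ * ⁅a, y⁆
      have h1 : ⁅a, x * y⁆ = ⁅a, x⁆ * (x * ⁅a, y⁆ * x⁻¹) := by group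
      rw [h1, hcent' y x]
      group }
  have hφ : ∀ g : G, φ g = ⁅a, g⁆ := fun g => rfl
  -- kernel is the centralizer
  have hker : Subgroup.centralizer ({a} : Set G) = φ.ker := by
    ext g
    rw [Subgroup.mem_centralizer_singleton_iff, MonoidHom.mem_ker, hφ]
    constructor
    · intro h
      rw [commutatorElement_def, ← h]
      group
    · intro h
      have h4 : g * a = ⁅a, g⁆⁻¹ * (a * g) := by group
      rw [h4, h]
      group
  -- range is contained in G_i
  have hrle : φ.range ≤ paperLCS G (j+2) := by
    rintro x ⟨g, rfl⟩
    exact hcommGi g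
  -- range is all of G_i
  have hrange : φ.range = paperLCS G (j+2) := by
    by_contra hne
    have hlt : φ.range < paperLCS G (j+2) := lt_of_le_of_ne hrle hne
    have hrnormal : φ.range.Normal := by
      constructor
      intro n hn g
      have h5 := Subgroup.mem_center_iff.mp (hGi_cent (hrle hn)) g
      have h6 : g * n * g⁻¹ = n := by rw [h5]; exact mul_inv_cancel_right n g
      rwa [h6]
    have hle : paperV G (j+2) ≤ φ.range := by rw [hV]; exact bot_le
    have heq := hH1 φ.range hrnormal hle hlt
    -- mk a is in the RHS
    letI := hrnormal
    have hmka : (QuotientGroup.mk' φ.range) a ∈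
        (paperLCS G (j+2-1)).map (QuotientGroup.mk' φ.range) ⊓
          Subgroup.center (G ⧸ φ.range) := by
      rw [Subgroup.mem_inf]
      constructor
      · exact Subgroup.mem_map_of_mem _ ha
      · rw [Subgroup.mem_center_iff]
        intro z
        obtain ⟨b, rfl⟩ := QuotientGroup.mk'_surjective φ.range z
        have key : a * b = ⁅a, b⁆ * (b * a) := by group
        show QuotientGroup.mk (b * a) = QuotientGroup.mk (a * b)
        rw [QuotientGroup.eq]
        rw [key]
        have h2 : (b * a)⁻¹ * (⁅a, b⁆ * (b * a)) = ⁅a, b⁆ := by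
          rw [← hcent' b (b * a)]
          group
        rw [h2]
        exact ⟨b, rfl⟩
    rw [← heq] at hmka
    obtain ⟨v, hv, hveq⟩ := hmka
    have : v⁻¹ * a ∈ φ.range := by
      rw [← QuotientGroup.eq]
      exact hveq
    have hainV : a ∈ paperV G (j+1) := by
      have h3 : v⁻¹ * a ∈ paperV G (j+1) := hGi_le_V (hrle this)
      have : a = v * (v⁻¹ * a) := by group
      rw [this]
      exact mul_mem hv h3
    exact ha' hainV
  -- assemble
  have hkn : (Subgroup.centralizer ({a} : Set G)).Normal := by
    rw [hker]; exact φ.normal_ker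
  refine ⟨hkn, ?_⟩
  letI := hkn
  exact ⟨((QuotientGroup.quotientMulEquivOfEq hker).trans
    (QuotientGroup.quotientKerEquivRange φ)).trans (MulEquiv.subgroupCongr hrange)⟩
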